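/- Let R be a commutative local ring and let φ ∈ M_2(R). Then φ is very clean if and only if φ is strongly clean in M_2(R), or I_2 + φ is invertible in M_2(R). -/

import Mathlib

/-!
An idempotent 2×2 matrix `e` over a local ring is either `1` or has determinant `0`. If `e = 1`,
then `φ + e` being a unit is the second alternative. If `det e = 0`, the identity
`det (φ + e) + det (φ - e) = 2 det φ` shows that when `det (φ + e)` is a unit, `det φ` or
`det (φ - e)` must be one too, so `φ - 0` or `φ - e` is a unit and `φ` is strongly clean.
-/

/-- An element `a` of a ring is *very clean* if there is an idempotent `e` commuting with `a`
such that `a - e` or `a + e` is a unit. -/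
def IsVeryClean {R : Type*} [Ring R] (a : R) : Prop :=
  ∃ e : R, IsIdempotentElem e ∧ a * e = e * a ∧ (IsUnit (a - e) ∨ IsUnit (a + e))

/-- A ring is *very clean* if every element is very clean. -/
def VeryCleanRing (R : Type*) [Ring R] : Prop :=
  ∀ a : R, IsVeryClean a

/-- An element `a` of a ring is *strongly clean* if there is an idempotent `e` commuting with `a`
such that `a - e` is a unit. -/
def IsStronglyClean {R : Type*} [Ring R] (a : R) : Prop :=
  ∃ e : R, IsIdempotentElem e ∧ a * e = e * a ∧ IsUnit (a - e)

/-- A ring is *strongly clean* if every element is strongly clean. -/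
def StronglyCleanRing (R : Type*) [Ring R] : Prop :=
  ∀ a : R, IsStronglyClean a

lemma IsStronglyClean.of_isUnit {R : Type*} [Ring R] {a : R} (ha : IsUnit a) :
    IsStronglyClean a :=
  ⟨0, .zero, by simp, by simpa using ha⟩

lemma IsVeryClean.of_isUnit_one_add {R : Type*} [Ring R] {a : R} (ha : IsUnit (1 + a)) :
    IsVeryClean a :=
  ⟨1, .one, by simp, Or.inr (by rwa [add_comm])⟩

lemma IsStronglyClean.isVeryClean {R : Type*} [Ring R] {a : R} (ha : IsStronglyClean a) :
    IsVeryClean a :=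
  let ⟨e, he, hc, hu⟩ := ha
  ⟨e, he, hc, Or.inl hu⟩

namespace IsLocalRing

variable {R : Type*} [CommRing R] [IsLocalRing R]

lemma eq_zero_or_eq_one_of_isIdempotentElem {e : R} (he : IsIdempotentElem e) :
    e = 0 ∨ e = 1 := by
  rcases isUnit_or_isUnit_one_sub_self e with hu | hu
  · exact Or.inr ((IsIdempotentElem.iff_eq_one_of_isUnit hu).mp he)
  · exact Or.inl (sub_eq_self.mp ((IsIdempotentElem.iff_eq_one_of_isUnit hu).mp he.one_sub))

lemma isUnit_or_isUnit_of_add_eq_two_mul {a b c : R} (h : a + b = 2 * c) (ha : IsUnit a) :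
    IsUnit c ∨ IsUnit b := by
  by_contra! hcb
  have hc : c ∈ maximalIdeal R := hcb.1
  have hb : b ∈ maximalIdeal R := hcb.2
  have : a ∈ maximalIdeal R := by
    rw [eq_sub_of_add_eq h]
    exact sub_mem (Ideal.mul_mem_left _ 2 hc) hb
  exact this ha

end IsLocalRing

lemma Matrix.eq_one_or_det_eq_zero_of_isIdempotentElem {n R : Type*} [Fintype n] [DecidableEq n]
    [CommRing R] [IsLocalRing R] {e : Matrix n n R} (he : IsIdempotentElem e) :
    e = 1 ∨ e.det = 0 := by
  rcases IsLocalRing.eq_zero_or_eq_one_of_isIdempotentElem (he.map detMonoidHom) with h | h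
  · exact Or.inr h
  · have hu : IsUnit e := (isUnit_iff_isUnit_det e).mpr (by simp_all)
    exact Or.inl ((IsIdempotentElem.iff_eq_one_of_isUnit hu).mp he)

lemma Matrix.det_fin_two_add_add_det_sub {R : Type*} [CommRing R] (A B : Matrix (Fin 2) (Fin 2) R) :
    (A + B).det + (A - B).det = 2 * A.det + 2 * B.det := by
  simp only [det_fin_two, add_apply, sub_apply]
  ring

theorem M2_very_clean_iff_strongly_clean_or_unit (R : Type*) [CommRing R] [IsLocalRing R]
    (φ : Matrix (Fin 2) (Fin 2) R) :
    IsVeryClean φ ↔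
      IsStronglyClean φ ∨ IsUnit ((1 : Matrix (Fin 2) (Fin 2) R) + φ) := by
  refine ⟨?_, fun h => h.elim IsStronglyClean.isVeryClean IsVeryClean.of_isUnit_one_add⟩
  rintro ⟨e, he, hc, hsub | hadd⟩
  · exact Or.inl ⟨e, he, hc, hsub⟩
  rcases Matrix.eq_one_or_det_eq_zero_of_isIdempotentElem he with rfl | hdet
  · exact Or.inr (by rwa [add_comm])
  have hsum : (φ + e).det + (φ - e).det = 2 * φ.det := by
    rw [Matrix.det_fin_two_add_add_det_sub, hdet, mul_zero, add_zero]
  simp only [Matrix.isUnit_iff_isUnit_det] at hadd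
  rcases IsLocalRing.isUnit_or_isUnit_of_add_eq_two_mul hsum hadd with hφ | hφe
  · exact Or.inl (.of_isUnit ((Matrix.isUnit_iff_isUnit_det φ).mpr hφ))
  · exact Or.inl ⟨e, he, hc, (Matrix.isUnit_iff_isUnit_det _).mpr hφe⟩
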